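/- arXiv:2407.11800 — 2 statements merged into one kernel-verified Lean document; each statement's English description precedes it below -/
import Mathlib

section
/- For μ,ν ∈ P₂(ℝ^d) and any O ∈ O_{μ,ν}, there exists an optimal IGW coupling π* for the pair (μ, O_♯ν) such that the cross-covariance matrix ∫ x yᵀ dπ*(x,y) is positive semidefinite, and A* := (1/2)∫ x yᵀ dπ*(x,y) achieves the infimum in the dual representation F₂(μ, O_♯ν) = inf_A ( 8‖A‖_F² + IOT_A(μ, O_♯ν) ). -/
open MeasureTheory Filter Matrix Set
open scoped RealInnerProductSpace Kronecker ENNReal NNReal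

noncomputable section

abbrev Ed (d : ℕ) : Type := EuclideanSpace ℝ (Fin d)

variable {d : ℕ}

def P2 (μ : Measure (Ed d)) : Prop :=
  IsProbabilityMeasure μ ∧ Integrable (fun x => ‖x‖ ^ 2) μ

def M2 (μ : Measure (Ed d)) : ℝ := ∫ x, ‖x‖ ^ 2 ∂μ

def covMat (μ : Measure (Ed d)) : Matrix (Fin d) (Fin d) ℝ :=
  Matrix.of fun i j => ∫ x, x i * x j ∂μ

def IsCoupling (π : Measure (Ed d × Ed d)) (μ ν : Measure (Ed d)) : Prop :=
  π.map Prod.fst = μ ∧ π.map Prod.snd = ν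

def igwCost (π : Measure (Ed d × Ed d)) : ℝ :=
  ∫ p, (⟪p.1.1, p.2.1⟫ - ⟪p.1.2, p.2.2⟫) ^ 2 ∂(π.prod π)

def IGW (μ ν : Measure (Ed d)) : ℝ :=
  Real.sqrt (sInf {c : ℝ | ∃ π : Measure (Ed d × Ed d), IsCoupling π μ ν ∧ c = igwCost π})

def IsOptIGW (π : Measure (Ed d × Ed d)) (μ ν : Measure (Ed d)) : Prop :=
  IsCoupling π μ ν ∧ ∀ π' : Measure (Ed d × Ed d), IsCoupling π' μ ν → igwCost π ≤ igwCost π'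

def crossCov (π : Measure (Ed d × Ed d)) : Matrix (Fin d) (Fin d) ℝ :=
  Matrix.of fun i j => ∫ p, p.1 i * p.2 j ∂π

def frobSq (A : Matrix (Fin d) (Fin d) ℝ) : ℝ := ∑ i, ∑ j, A i j ^ 2

def W2 (μ ν : Measure (Ed d)) : ℝ :=
  Real.sqrt (sInf {c : ℝ | ∃ π : Measure (Ed d × Ed d), IsCoupling π μ ν ∧
    c = ∫ p, ‖p.1 - p.2‖ ^ 2 ∂π})

def lambdaMin (A : Matrix (Fin d) (Fin d) ℝ) : ℝ :=
  sInf {r : ℝ | ∃ v : Fin d → ℝ, ∑ i, v i ^ 2 = 1 ∧ r = ∑ i, v i * A.mulVec v i}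

def lambdaMax (A : Matrix (Fin d) (Fin d) ℝ) : ℝ :=
  sSup {r : ℝ | ∃ v : Fin d → ℝ, ∑ i, v i ^ 2 = 1 ∧ r = ∑ i, v i * A.mulVec v i}

def IsOrthoMat (O : Matrix (Fin d) (Fin d) ℝ) : Prop := O * Oᵀ = 1

def matMap (O : Matrix (Fin d) (Fin d) ℝ) : Ed d → Ed d :=
  fun x => (EuclideanSpace.equiv (Fin d) ℝ).symm (O.mulVec (EuclideanSpace.equiv (Fin d) ℝ x))

def matPush (O : Matrix (Fin d) (Fin d) ℝ) (μ : Measure (Ed d)) : Measure (Ed d) :=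
  μ.map (matMap O)

def OSet (μ ν : Measure (Ed d)) : Set (Matrix (Fin d) (Fin d) ℝ) :=
  {O | ∃ (π : Measure (Ed d × Ed d)) (P Q L : Matrix (Fin d) (Fin d) ℝ),
    IsOptIGW π μ ν ∧ IsOrthoMat P ∧ IsOrthoMat Q ∧
    (∀ i j, i ≠ j → L i j = 0) ∧ (∀ i, 0 ≤ L i i) ∧
    crossCov π = P * L * Qᵀ ∧ O = P * Qᵀ}

/-- One step of the IGW minimizing movement (proximal) scheme followed by the
orthogonal PSD transform. -/
def IsMMStep (F : Measure (Ed d) → EReal) (τ : ℝ) (μ ν : Measure (Ed d)) : Prop :=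
  ∃ σ : Measure (Ed d), P2 σ ∧
    (∀ κ : Measure (Ed d), P2 κ →
      F σ + ((IGW σ μ ^ 2 / (2 * τ) : ℝ) : EReal) ≤ F κ + ((IGW κ μ ^ 2 / (2 * τ) : ℝ) : EReal)) ∧
    ∃ O ∈ OSet μ σ, ν = matPush O σ

def IsMMScheme (F : Measure (Ed d) → EReal) (μ0 : Measure (Ed d)) (τ : ℝ) (n : ℕ)
    (ρ : ℕ → Measure (Ed d)) : Prop :=
  ρ 0 = μ0 ∧ ∀ i < n, IsMMStep F τ (ρ i) (ρ (i + 1))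

/-- Piecewise constant interpolation: `ρ̄(t) = ρ i` for `t ∈ ((i-1)τ, iτ]`. -/
def pcInterp (ρ : ℕ → Measure (Ed d)) (τ : ℝ) (t : ℝ) : Measure (Ed d) := ρ ⌈t / τ⌉₊

def RotInvariant (F : Measure (Ed d) → EReal) : Prop :=
  ∀ O : Matrix (Fin d) (Fin d) ℝ, IsOrthoMat O → ∀ μ : Measure (Ed d), F (matPush O μ) = F μ

def WeakTendsto (μs : ℕ → Measure (Ed d)) (μ : Measure (Ed d)) : Prop :=
  ∀ f : Ed d → ℝ, Continuous f → (∃ C, ∀ x, |f x| ≤ C) →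
    Tendsto (fun n => ∫ x, f x ∂(μs n)) atTop (nhds (∫ x, f x ∂μ))

def WeakLSC (F : Measure (Ed d) → EReal) : Prop :=
  ∀ (μs : ℕ → Measure (Ed d)) (μ : Measure (Ed d)),
    (∀ n, P2 (μs n)) → P2 μ → WeakTendsto μs μ →
      F μ ≤ liminf (fun n => F (μs n)) atTop

/-- `Fs` is the infimum of `F` over `P₂(ℝ^d)` (in particular `F` is bounded below). -/
def IsInfimum (F : Measure (Ed d) → EReal) (Fs : ℝ) : Prop :=
  (∀ μ : Measure (Ed d), P2 μ → (Fs : EReal) ≤ F μ) ∧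
    ∀ ε : ℝ, 0 < ε → ∃ μ : Measure (Ed d), P2 μ ∧ F μ < ((Fs + ε : ℝ) : EReal)

/-- A gluing of two couplings sharing the first marginal. -/
def IsGluing (π : Measure (Ed d × Ed d × Ed d)) (π01 π02 : Measure (Ed d × Ed d)) : Prop :=
  π.map (fun p => (p.1, p.2.1)) = π01 ∧ π.map (fun p => (p.1, p.2.2)) = π02

/-- Point on the generalized geodesic: push forward by `(x,y,z) ↦ (1-t)y + tz`. -/
def genGeo (π : Measure (Ed d × Ed d × Ed d)) (t : ℝ) : Measure (Ed d) :=
  π.map fun p => (1 - t) • p.2.1 + t • p.2.2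

/-- The glued plan underlying a generalized IGW geodesic from `μ1` to `μ2` w.r.t. `μ0`. -/
def IsGenGeoGluing (π : Measure (Ed d × Ed d × Ed d)) (μ0 μ1 μ2 : Measure (Ed d)) : Prop :=
  ∃ π01 π02 : Measure (Ed d × Ed d),
    IsOptIGW π01 μ0 μ1 ∧ IsOptIGW π02 μ0 μ2 ∧
    (crossCov π01).PosSemidef ∧ IsUnit (crossCov π01).det ∧
    (crossCov π02).PosSemidef ∧ IsUnit (crossCov π02).det ∧
    IsGluing π π01 π02

/-- `∬ |⟨y,y'⟩-⟨z,z'⟩|² dπ⊗π` for a glued plan. -/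
def geoDistortion (π : Measure (Ed d × Ed d × Ed d)) : ℝ :=
  ∫ p, (⟪p.1.2.1, p.2.2.1⟫ - ⟪p.1.2.2, p.2.2.2⟫) ^ 2 ∂(π.prod π)

/-- `λ`-convexity along generalized IGW geodesics. -/
def LambdaConvex (F : Measure (Ed d) → EReal) (lam : ℝ) : Prop :=
  ∀ (μ0 μ1 μ2 : Measure (Ed d)) (π : Measure (Ed d × Ed d × Ed d)),
    P2 μ0 → P2 μ1 → P2 μ2 → IsGenGeoGluing π μ0 μ1 μ2 →
    ∀ t ∈ Icc (0 : ℝ) 1,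
      F (genGeo π t) ≤ ((1 - t : ℝ) : EReal) * F μ1 + ((t : ℝ) : EReal) * F μ2
        - ((lam * t * (1 - t) * geoDistortion π : ℝ) : EReal)

def l2diff (μ : Measure (Ed d)) (T : Ed d → Ed d) : ℝ :=
  Real.sqrt (∫ x, ‖T x - x‖ ^ 2 ∂μ)

/-- Strong Fréchet subdifferential of `F` at `μ`. -/
def IsStrongSubdiff (F : Measure (Ed d) → EReal) (μ : Measure (Ed d)) (ξ : Ed d → Ed d) : Prop :=
  MemLp ξ 2 μ ∧
  ∀ ε : ℝ, 0 < ε → ∃ δ : ℝ, 0 < δ ∧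
    ∀ T : Ed d → Ed d, AEMeasurable T μ → Integrable (fun x => ‖T x - x‖ ^ 2) μ →
      l2diff μ T ≤ δ →
      F μ + (((∫ x, ⟪ξ x, T x - x⟫ ∂μ) - ε * l2diff μ T : ℝ) : EReal) ≤ F (μ.map T)

/-- Regularity of `F` in the sense of Ambrosio-Gigli-Savaré, Definition 10.1.4. -/
def AGSRegular (F : Measure (Ed d) → EReal) : Prop :=
  ∀ (μs : ℕ → Measure (Ed d)) (μ : Measure (Ed d)) (ξs : ℕ → Ed d → Ed d) (ξ : Ed d → Ed d)
    (C phi : ℝ),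
    (∀ n, P2 (μs n)) → P2 μ →
    (∀ n, IsStrongSubdiff F (μs n) (ξs n)) →
    (∀ n, ∫ x, ‖ξs n x‖ ^ 2 ∂(μs n) ≤ C) →
    Tendsto (fun n => W2 (μs n) μ) atTop (nhds 0) →
    Tendsto (fun n => F (μs n)) atTop (nhds ((phi : EReal))) →
    (∀ f : Ed d → Ed d, Continuous f → HasCompactSupport f →
      Tendsto (fun n => ∫ x, ⟪f x, ξs n x⟫ ∂(μs n)) atTop (nhds (∫ x, ⟪f x, ξ x⟫ ∂μ))) →
    MemLp ξ 2 μ →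
    IsStrongSubdiff F μ ξ ∧ F μ = (phi : EReal)

/-- The operator `L_{A,μ}[v](x) = 2(A v(x) + ∫ y ⟨v(y),x⟩ dμ(y))`. -/
def mobOp (A : Matrix (Fin d) (Fin d) ℝ) (μ : Measure (Ed d)) (v : Ed d → Ed d) :
    Ed d → Ed d := fun x =>
  (EuclideanSpace.equiv (Fin d) ℝ).symm fun k =>
    2 * ((A.mulVec (EuclideanSpace.equiv (Fin d) ℝ (v x))) k + ∫ y, y k * ⟪v y, x⟫ ∂μ)

/-- The invariant space `I_μ` of vector fields with symmetric `∫ x v(x)ᵀ dμ`. -/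
def InInvariant (μ : Measure (Ed d)) (v : Ed d → Ed d) : Prop :=
  MemLp v 2 μ ∧ ∀ i j, ∫ x, x i * v x j ∂μ = ∫ x, x j * v x i ∂μ

/-- The principal inverse of `L_{A,μ}`, given by the explicit Kronecker-product formula. -/
def principalInv (A : Matrix (Fin d) (Fin d) ℝ) (μ : Measure (Ed d)) (w : Ed d → Ed d) :
    Ed d → Ed d := fun x =>
  (EuclideanSpace.equiv (Fin d) ℝ).symm fun k =>
    (1 / 2) * (A⁻¹.mulVec (EuclideanSpace.equiv (Fin d) ℝ (w x))) k
      - (1 / 2) * ∑ i : Fin d, x i *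
          ((((1 : Matrix (Fin d) (Fin d) ℝ) ⊗ₖ (A * A) + covMat μ ⊗ₖ A)⁻¹).mulVec
            (fun q : Fin d × Fin d => ∫ y, y q.1 * w y q.2 ∂μ)) (i, k)

def IsOptW2 (π : Measure (Ed d × Ed d)) (μ ν : Measure (Ed d)) : Prop :=
  IsCoupling π μ ν ∧ ∀ π' : Measure (Ed d × Ed d), IsCoupling π' μ ν →
    (∫ p, ‖p.1 - p.2‖ ^ 2 ∂π) ≤ ∫ p, ‖p.1 - p.2‖ ^ 2 ∂π'

/-- Brenier (quadratic-cost optimal transport) map from `μ` to `ν`. -/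
def IsBrenierMap (μ ν : Measure (Ed d)) (T : Ed d → Ed d) : Prop :=
  AEMeasurable T μ ∧ IsOptW2 (μ.map fun x => (x, T x)) μ ν

/-- Gromov-Monge map: a map inducing an optimal IGW coupling. -/
def IsGMmap (μ ν : Measure (Ed d)) (T : Ed d → Ed d) : Prop :=
  AEMeasurable T μ ∧ IsOptIGW (μ.map fun x => (x, T x)) μ ν

/-- The continuity equation `∂ₜρ + ∇·(ρ v) = 0` on `(a,b) × ℝ^d`, in the distributional sense. -/
def ContEqOn (ρ : ℝ → Measure (Ed d)) (v : ℝ → Ed d → Ed d) (a b : ℝ) : Prop :=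
  ∀ g : ℝ × Ed d → ℝ, ContDiff ℝ (⊤ : ℕ∞) g → HasCompactSupport g →
    (tsupport g ⊆ Ioo a b ×ˢ univ) →
    (∫ t in a..b, ∫ x, deriv (fun s => g (s, x)) t ∂(ρ t)) =
      -∫ t in a..b, ∫ x, ⟪gradient (fun y => g (t, y)) x, v t x⟫ ∂(ρ t)

/-- The IGW Riemannian metric tensor `g_μ(v,w)`. -/
def gTensor (μ : Measure (Ed d)) (v w : Ed d → Ed d) : ℝ :=
  ∫ p, (⟪v p.1, p.2⟫ + ⟪p.1, v p.2⟫) * (⟪w p.1, p.2⟫ + ⟪p.1, w p.2⟫) ∂(μ.prod μ)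

/-- The optimal transport cost between `μ` and `ν` for cost `c`. -/
def otCost (c : Ed d → Ed d → ℝ) (μ ν : Measure (Ed d)) : ℝ :=
  sInf {v : ℝ | ∃ π : Measure (Ed d × Ed d), IsCoupling π μ ν ∧ v = ∫ p, c p.1 p.2 ∂π}

/-- The cost `c_A(x,y) = -8 xᵀ A y`. -/
def costA (A : Matrix (Fin d) (Fin d) ℝ) : Ed d → Ed d → ℝ :=
  fun x y => -8 * ∑ i, ∑ j, x i * A i j * y j

/-- `IOT_A(μ,ν)`: optimal transport cost with cost `c_A`. -/
def IOT (A : Matrix (Fin d) (Fin d) ℝ) (μ ν : Measure (Ed d)) : ℝ := otCost (costA A) μ ν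

lemma continuous_coord (i : Fin d) : Continuous fun x : Ed d => x i :=
  (EuclideanSpace.proj (𝕜 := ℝ) i).continuous

lemma coord_sq_le (x : Ed d) (i : Fin d) : x i ^ 2 ≤ ‖x‖ ^ 2 := by
  rw [EuclideanSpace.norm_eq, Real.sq_sqrt (by positivity)]
  calc x i ^ 2 = ‖x i‖ ^ 2 := by rw [Real.norm_eq_abs, sq_abs]
  _ ≤ ∑ j, ‖x j‖ ^ 2 := Finset.single_le_sum (f := fun j => ‖x j‖ ^ 2)
      (fun j _ => by positivity) (Finset.mem_univ i)

lemma abs_coord_le (x : Ed d) (i : Fin d) : |x i| ≤ ‖x‖ := by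
  have := coord_sq_le x i
  nlinarith [abs_nonneg (x i), norm_nonneg x, sq_abs (x i)]

lemma inner_ed (x y : Ed d) : ⟪x, y⟫ = ∑ i, x i * y i := by
  simp [PiLp.inner_apply, RCLike.inner_apply, conj_trivial, mul_comm]

section Coupling
variable {π : Measure (Ed d × Ed d)} {μ ν : Measure (Ed d)}

lemma IsCoupling.prob (h : IsCoupling π μ ν) (hμ : IsProbabilityMeasure μ) :
    IsProbabilityMeasure π := by
  constructor
  have : μ Set.univ = 1 := hμ.measure_univ
  rw [← h.1, Measure.map_apply measurable_fst MeasurableSet.univ] at this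
  simpa using this

lemma int_norm_sq_fst (h : IsCoupling π μ ν) (hμ : P2 μ) :
    Integrable (fun p : Ed d × Ed d => ‖p.1‖ ^ 2) π := by
  have h2 := hμ.2
  rw [← h.1] at h2
  exact (integrable_map_measure ((continuous_norm.pow 2).aestronglyMeasurable)
    measurable_fst.aemeasurable).mp h2

lemma int_norm_sq_snd (h : IsCoupling π μ ν) (hν : P2 ν) :
    Integrable (fun p : Ed d × Ed d => ‖p.2‖ ^ 2) π := by
  have h2 := hν.2
  rw [← h.2] at h2
  exact (integrable_map_measure ((continuous_norm.pow 2).aestronglyMeasurable)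
    measurable_snd.aemeasurable).mp h2

lemma int_norm_mul (h : IsCoupling π μ ν) (hμ : P2 μ) (hν : P2 ν) :
    Integrable (fun p : Ed d × Ed d => ‖p.1‖ * ‖p.2‖) π := by
  refine (((int_norm_sq_fst h hμ).add (int_norm_sq_snd h hν)).div_const 2).mono'
    ((continuous_fst.norm.mul continuous_snd.norm).aestronglyMeasurable) ?_
  filter_upwards with p
  have h1 : (0:ℝ) ≤ ‖p.1‖ := norm_nonneg _
  have h2 : (0:ℝ) ≤ ‖p.2‖ := norm_nonneg _
  rw [Real.norm_eq_abs, abs_of_nonneg (by positivity)]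
  simp only [Pi.add_apply]
  nlinarith [sq_nonneg (‖p.1‖ - ‖p.2‖)]

lemma int_coord_mul (h : IsCoupling π μ ν) (hμ : P2 μ) (hν : P2 ν) (i j : Fin d) :
    Integrable (fun p : Ed d × Ed d => p.1 i * p.2 j) π := by
  refine (int_norm_mul h hμ hν).mono'
    (((continuous_coord i).comp continuous_fst).mul
      ((continuous_coord j).comp continuous_snd)).aestronglyMeasurable ?_
  filter_upwards with p
  rw [Real.norm_eq_abs, abs_mul]
  exact mul_le_mul (abs_coord_le _ _) (abs_coord_le _ _) (abs_nonneg _) (norm_nonneg _)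

end Coupling

instance edProdBorel : BorelSpace (Ed d × Ed d) := Prod.borelSpace

section Identity
variable {π : Measure (Ed d × Ed d)} {μ ν : Measure (Ed d)}

lemma igwCost_eq (hμ : P2 μ) (hν : P2 ν) (h : IsCoupling π μ ν) :
    igwCost π = (∫ q, ⟪q.1, q.2⟫ ^ 2 ∂(μ.prod μ)) + (∫ q, ⟪q.1, q.2⟫ ^ 2 ∂(ν.prod ν))
      - 2 * frobSq (crossCov π) := by
  haveI : IsProbabilityMeasure π := h.prob hμ.1
  -- continuity facts
  have hca : Continuous fun p : (Ed d × Ed d) × (Ed d × Ed d) => ⟪p.1.1, p.2.1⟫ :=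
    (continuous_fst.fst).inner (continuous_snd.fst)
  have hcb : Continuous fun p : (Ed d × Ed d) × (Ed d × Ed d) => ⟪p.1.2, p.2.2⟫ :=
    (continuous_fst.snd).inner (continuous_snd.snd)
  -- integrability of a², b², ab
  have hFa : Integrable (fun p : (Ed d × Ed d) × (Ed d × Ed d) => ‖p.1.1‖ ^ 2 * ‖p.2.1‖ ^ 2)
      (π.prod π) := (int_norm_sq_fst h hμ).mul_prod (int_norm_sq_fst h hμ)
  have hFb : Integrable (fun p : (Ed d × Ed d) × (Ed d × Ed d) => ‖p.1.2‖ ^ 2 * ‖p.2.2‖ ^ 2)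
      (π.prod π) := (int_norm_sq_snd h hν).mul_prod (int_norm_sq_snd h hν)
  have hFab : Integrable (fun p : (Ed d × Ed d) × (Ed d × Ed d) =>
      (‖p.1.1‖ * ‖p.1.2‖) * (‖p.2.1‖ * ‖p.2.2‖)) (π.prod π) :=
    (int_norm_mul h hμ hν).mul_prod (int_norm_mul h hμ hν)
  have hA2 : Integrable (fun p : (Ed d × Ed d) × (Ed d × Ed d) => ⟪p.1.1, p.2.1⟫ ^ 2)
      (π.prod π) := by
    refine hFa.mono' (hca.pow 2).aestronglyMeasurable ?_
    filter_upwards with p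
    rw [Real.norm_eq_abs, abs_of_nonneg (sq_nonneg _)]
    have := abs_real_inner_le_norm p.1.1 p.2.1
    nlinarith [abs_nonneg ⟪p.1.1, p.2.1⟫, sq_abs ⟪p.1.1, p.2.1⟫]
  have hB2 : Integrable (fun p : (Ed d × Ed d) × (Ed d × Ed d) => ⟪p.1.2, p.2.2⟫ ^ 2)
      (π.prod π) := by
    refine hFb.mono' (hcb.pow 2).aestronglyMeasurable ?_
    filter_upwards with p
    rw [Real.norm_eq_abs, abs_of_nonneg (sq_nonneg _)]
    have := abs_real_inner_le_norm p.1.2 p.2.2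
    nlinarith [abs_nonneg ⟪p.1.2, p.2.2⟫, sq_abs ⟪p.1.2, p.2.2⟫]
  have hAB : Integrable (fun p : (Ed d × Ed d) × (Ed d × Ed d) =>
      ⟪p.1.1, p.2.1⟫ * ⟪p.1.2, p.2.2⟫) (π.prod π) := by
    refine hFab.mono' (hca.mul hcb).aestronglyMeasurable ?_
    filter_upwards with p
    rw [Real.norm_eq_abs, abs_mul]
    have h1 := abs_real_inner_le_norm p.1.1 p.2.1
    have h2 := abs_real_inner_le_norm p.1.2 p.2.2
    calc |⟪p.1.1, p.2.1⟫| * |⟪p.1.2, p.2.2⟫| ≤ (‖p.1.1‖ * ‖p.2.1‖) * (‖p.1.2‖ * ‖p.2.2‖) :=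
          mul_le_mul h1 h2 (abs_nonneg _) (by positivity)
      _ = (‖p.1.1‖ * ‖p.1.2‖) * (‖p.2.1‖ * ‖p.2.2‖) := by ring
  -- expansion
  have hexp : igwCost π = (∫ p, ⟪p.1.1, p.2.1⟫ ^ 2 ∂(π.prod π))
      + (∫ p, ⟪p.1.2, p.2.2⟫ ^ 2 ∂(π.prod π))
      - 2 * ∫ p, ⟪p.1.1, p.2.1⟫ * ⟪p.1.2, p.2.2⟫ ∂(π.prod π) := by
    unfold igwCost
    have : ∀ p : (Ed d × Ed d) × (Ed d × Ed d),
        (⟪p.1.1, p.2.1⟫ - ⟪p.1.2, p.2.2⟫) ^ 2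
        = ⟪p.1.1, p.2.1⟫ ^ 2 + ⟪p.1.2, p.2.2⟫ ^ 2
          - 2 * (⟪p.1.1, p.2.1⟫ * ⟪p.1.2, p.2.2⟫) := fun p => by ring
    simp_rw [this]
    have hsum : Integrable (fun p : (Ed d × Ed d) × (Ed d × Ed d) =>
        ⟪p.1.1, p.2.1⟫ ^ 2 + ⟪p.1.2, p.2.2⟫ ^ 2) (π.prod π) := hA2.add hB2
    rw [integral_sub hsum (hAB.const_mul 2), integral_add hA2 hB2, integral_const_mul]
  -- the two marginal terms
  have hmapμ : (π.prod π).map (Prod.map (Prod.fst) (Prod.fst)) = μ.prod μ := by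
    rw [← h.1, Measure.map_prod_map _ _ measurable_fst measurable_fst]
  have hmapν : (π.prod π).map (Prod.map (Prod.snd) (Prod.snd)) = ν.prod ν := by
    rw [← h.2, Measure.map_prod_map _ _ measurable_snd measurable_snd]
  have hμterm : (∫ q, ⟪q.1, q.2⟫ ^ 2 ∂(μ.prod μ))
      = ∫ p, ⟪p.1.1, p.2.1⟫ ^ 2 ∂(π.prod π) := by
    rw [← hmapμ, integral_map (measurable_fst.prodMap measurable_fst).aemeasurable
      (((continuous_fst.inner continuous_snd).pow 2).aestronglyMeasurable)]
    rfl
  have hνterm : (∫ q, ⟪q.1, q.2⟫ ^ 2 ∂(ν.prod ν))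
      = ∫ p, ⟪p.1.2, p.2.2⟫ ^ 2 ∂(π.prod π) := by
    rw [← hmapν, integral_map (measurable_snd.prodMap measurable_snd).aemeasurable
      (((continuous_fst.inner continuous_snd).pow 2).aestronglyMeasurable)]
    rfl
  -- the cross term
  have hcross : (∫ p, ⟪p.1.1, p.2.1⟫ * ⟪p.1.2, p.2.2⟫ ∂(π.prod π)) = frobSq (crossCov π) := by
    have hrw : ∀ p : (Ed d × Ed d) × (Ed d × Ed d),
        ⟪p.1.1, p.2.1⟫ * ⟪p.1.2, p.2.2⟫
        = ∑ i, ∑ j, (p.1.1 i * p.1.2 j) * (p.2.1 i * p.2.2 j) := by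
      intro p
      rw [inner_ed, inner_ed, Finset.sum_mul_sum]
      exact Finset.sum_congr rfl fun i _ => Finset.sum_congr rfl fun j _ => by ring
    have hint : ∀ i j : Fin d, Integrable (fun p : (Ed d × Ed d) × (Ed d × Ed d) =>
        (p.1.1 i * p.1.2 j) * (p.2.1 i * p.2.2 j)) (π.prod π) :=
      fun i j => (int_coord_mul h hμ hν i j).mul_prod (int_coord_mul h hμ hν i j)
    simp_rw [hrw]
    rw [integral_finset_sum _ fun i _ => integrable_finset_sum _ fun j _ => hint i j]
    have : ∀ i : Fin d, (∫ p, ∑ j, (p.1.1 i * p.1.2 j) * (p.2.1 i * p.2.2 j) ∂(π.prod π))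
        = ∑ j, (∫ q, q.1 i * q.2 j ∂π) ^ 2 := by
      intro i
      rw [integral_finset_sum _ fun j _ => hint i j]
      refine Finset.sum_congr rfl fun j _ => ?_
      have hpm := integral_prod_mul (μ := π) (ν := π)
        (f := fun q : Ed d × Ed d => q.1 i * q.2 j) (g := fun q : Ed d × Ed d => q.1 i * q.2 j)
      rw [sq]
      exact hpm
    simp_rw [this]
    rfl
  rw [hexp, hμterm, hνterm, hcross]

end Identity

section CostInt
variable {π : Measure (Ed d × Ed d)} {μ ν : Measure (Ed d)}

lemma integral_costA (h : IsCoupling π μ ν) (hμ : P2 μ) (hν : P2 ν)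
    (A : Matrix (Fin d) (Fin d) ℝ) :
    ∫ p, costA A p.1 p.2 ∂π = -8 * ∑ i, ∑ j, A i j * crossCov π i j := by
  unfold costA
  rw [integral_const_mul]
  congr 1
  have hrw : ∀ p : Ed d × Ed d, ∀ i j : Fin d,
      p.1 i * A i j * p.2 j = A i j * (p.1 i * p.2 j) := fun p i j => by ring
  simp_rw [hrw]
  rw [integral_finset_sum _ fun i _ => integrable_finset_sum _ fun j _ =>
    (int_coord_mul h hμ hν i j).const_mul (A i j)]
  refine Finset.sum_congr rfl fun i _ => ?_
  rw [integral_finset_sum _ fun j _ => (int_coord_mul h hμ hν i j).const_mul (A i j)]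
  refine Finset.sum_congr rfl fun j _ => ?_
  rw [integral_const_mul]
  rfl

end CostInt

lemma matMap_apply (O : Matrix (Fin d) (Fin d) ℝ) (x : Ed d) (i : Fin d) :
    matMap O x i = ∑ j, O i j * x j := rfl

lemma continuous_matMap (O : Matrix (Fin d) (Fin d) ℝ) : Continuous (matMap O) := by
  have h1 : Continuous fun v : Fin d → ℝ => O.mulVec v :=
    continuous_pi fun i => by
      simpa [Matrix.mulVec, dotProduct] using
        continuous_finset_sum Finset.univ fun j _ => (continuous_const.mul (continuous_apply j))
  exact (EuclideanSpace.equiv (Fin d) ℝ).symm.continuous.comp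
    (h1.comp (EuclideanSpace.equiv (Fin d) ℝ).continuous)

lemma inner_mulVec (O : Matrix (Fin d) (Fin d) ℝ) (hO : Oᵀ * O = 1) (x y : Fin d → ℝ) :
    (O.mulVec x) ⬝ᵥ (O.mulVec y) = x ⬝ᵥ y := by
  rw [Matrix.dotProduct_mulVec, ← Matrix.mulVec_transpose, Matrix.mulVec_mulVec, hO,
    Matrix.one_mulVec]

lemma matMap_inner (O : Matrix (Fin d) (Fin d) ℝ) (hO : Oᵀ * O = 1) (x y : Ed d) :
    ⟪matMap O x, matMap O y⟫ = ⟪x, y⟫ := by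
  rw [inner_ed, inner_ed]
  exact inner_mulVec O hO x y

lemma matMap_comp (O₂ O₁ : Matrix (Fin d) (Fin d) ℝ) (h : O₂ * O₁ = 1) (x : Ed d) :
    matMap O₂ (matMap O₁ x) = x := by
  show (EuclideanSpace.equiv (Fin d) ℝ).symm (O₂.mulVec (O₁.mulVec x)) = x
  rw [Matrix.mulVec_mulVec, h, Matrix.one_mulVec]
  rfl

lemma matMap_norm_sq (O : Matrix (Fin d) (Fin d) ℝ) (hO : Oᵀ * O = 1) (x : Ed d) :
    ‖matMap O x‖ ^ 2 = ‖x‖ ^ 2 := by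
  rw [← real_inner_self_eq_norm_sq, ← real_inner_self_eq_norm_sq, matMap_inner O hO]

section MapLemmas
variable {π : Measure (Ed d × Ed d)} {μ ν : Measure (Ed d)}

lemma coupling_map (h : IsCoupling π μ ν) {T : Ed d → Ed d} (hT : Measurable T) :
    IsCoupling (π.map (Prod.map id T)) μ (ν.map T) := by
  constructor
  · rw [Measure.map_map measurable_fst (measurable_id.prodMap hT)]
    exact h.1
  · rw [Measure.map_map measurable_snd (measurable_id.prodMap hT),
      show Prod.snd ∘ Prod.map (id : Ed d → Ed d) T = T ∘ Prod.snd from rfl,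
      ← Measure.map_map hT measurable_snd, h.2]

lemma P2.map {T : Ed d → Ed d} (hν : P2 ν) (hT : Continuous T)
    (hn : ∀ x, ‖T x‖ ^ 2 = ‖x‖ ^ 2) : P2 (ν.map T) := by
  haveI := hν.1
  refine ⟨Measure.isProbabilityMeasure_map hT.measurable.aemeasurable, ?_⟩
  rw [integrable_map_measure (g := fun x : Ed d => ‖x‖ ^ 2) (continuous_norm.pow 2).aestronglyMeasurable
    hT.measurable.aemeasurable]
  refine hν.2.congr ?_
  filter_upwards with x
  exact (hn x).symm

lemma igwCost_map (h : IsCoupling π μ ν) (hμ : IsProbabilityMeasure μ)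
    {T : Ed d → Ed d} (hT : Continuous T) (hi : ∀ x y, ⟪T x, T y⟫ = ⟪x, y⟫) :
    igwCost (π.map (Prod.map id T)) = igwCost π := by
  haveI : IsProbabilityMeasure π := h.prob hμ
  have hG : Measurable (Prod.map (id : Ed d → Ed d) T) := measurable_id.prodMap hT.measurable
  unfold igwCost
  have hc : Continuous fun p : (Ed d × Ed d) × (Ed d × Ed d) =>
      (⟪p.1.1, p.2.1⟫ - ⟪p.1.2, p.2.2⟫) ^ 2 :=
    ((continuous_fst.fst.inner continuous_snd.fst).sub
      (continuous_fst.snd.inner continuous_snd.snd)).pow 2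
  rw [Measure.map_prod_map _ _ hG hG,
    integral_map (hG.prodMap hG).aemeasurable hc.aestronglyMeasurable]
  congr 1
  funext p
  show (⟪p.1.1, p.2.1⟫ - ⟪T p.1.2, T p.2.2⟫) ^ 2 = _
  rw [hi]

lemma crossCov_map (h : IsCoupling π μ ν) (hμ : P2 μ) (hν : P2 ν)
    (O : Matrix (Fin d) (Fin d) ℝ) :
    crossCov (π.map (Prod.map id (matMap O))) = crossCov π * Oᵀ := by
  have hG : Measurable (Prod.map (id : Ed d → Ed d) (matMap O)) :=
    measurable_id.prodMap (continuous_matMap O).measurable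
  ext i j
  show (∫ p, p.1 i * p.2 j ∂(π.map (Prod.map id (matMap O)))) = ∑ k, crossCov π i k * Oᵀ k j
  have hc : Continuous fun p : Ed d × Ed d => p.1 i * p.2 j :=
    ((continuous_coord i).comp continuous_fst).mul ((continuous_coord j).comp continuous_snd)
  rw [integral_map hG.aemeasurable hc.aestronglyMeasurable]
  have hrw : ∀ p : Ed d × Ed d,
      (Prod.map (id : Ed d → Ed d) (matMap O) p).1 i * (Prod.map id (matMap O) p).2 j
      = ∑ k, O j k * (p.1 i * p.2 k) := by
    intro p
    show p.1 i * matMap O p.2 j = _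
    rw [matMap_apply, Finset.mul_sum]
    exact Finset.sum_congr rfl fun k _ => by ring
  simp_rw [hrw]
  rw [integral_finset_sum _ fun k _ => (int_coord_mul h hμ hν i k).const_mul (O j k)]
  refine Finset.sum_congr rfl fun k _ => ?_
  rw [integral_const_mul, Matrix.transpose_apply]
  show O j k * ∫ p, p.1 i * p.2 k ∂π = crossCov π i k * O j k
  rw [mul_comm]
  rfl

end MapLemmas

section Final
variable {π : Measure (Ed d × Ed d)} {μ ν : Measure (Ed d)}

lemma frob_ineq (A S : Matrix (Fin d) (Fin d) ℝ) :
    -(8 * frobSq A) - 2 * frobSq S ≤ -8 * ∑ i, ∑ j, A i j * S i j := by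
  have h0 : (0:ℝ) ≤ ∑ i, ∑ j, (2 * A i j - S i j) ^ 2 :=
    Finset.sum_nonneg fun i _ => Finset.sum_nonneg fun j _ => sq_nonneg _
  have hexp : ∑ i, ∑ j, (2 * A i j - S i j) ^ 2
      = 4 * frobSq A - 4 * (∑ i, ∑ j, A i j * S i j) + frobSq S := by
    have hterm : ∀ i j : Fin d, (2 * A i j - S i j) ^ 2
        = 4 * A i j ^ 2 - 4 * (A i j * S i j) + S i j ^ 2 := fun _ _ => by ring
    unfold frobSq
    simp_rw [hterm, Finset.sum_add_distrib, Finset.sum_sub_distrib, ← Finset.mul_sum]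
  linarith

lemma frobSq_nonneg (A : Matrix (Fin d) (Fin d) ℝ) : 0 ≤ frobSq A :=
  Finset.sum_nonneg fun i _ => Finset.sum_nonneg fun j _ => sq_nonneg _

lemma frobSq_smul (c : ℝ) (A : Matrix (Fin d) (Fin d) ℝ) :
    frobSq (c • A) = c ^ 2 * frobSq A := by
  unfold frobSq
  rw [Finset.mul_sum]
  refine Finset.sum_congr rfl fun i _ => ?_
  rw [Finset.mul_sum]
  refine Finset.sum_congr rfl fun j _ => ?_
  simp [Matrix.smul_apply, smul_eq_mul]
  ring

lemma sum_smul_self (c : ℝ) (A : Matrix (Fin d) (Fin d) ℝ) :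
    ∑ i, ∑ j, (c • A) i j * A i j = c * frobSq A := by
  unfold frobSq
  rw [Finset.mul_sum]
  refine Finset.sum_congr rfl fun i _ => ?_
  rw [Finset.mul_sum]
  refine Finset.sum_congr rfl fun j _ => ?_
  simp [Matrix.smul_apply, smul_eq_mul]
  ring

lemma psd_PLPt (P L : Matrix (Fin d) (Fin d) ℝ) (hLoff : ∀ i j, i ≠ j → L i j = 0)
    (hLd : ∀ i, 0 ≤ L i i) : (P * L * Pᵀ).PosSemidef := by
  have hLdiag : L = Matrix.diagonal (fun i => L i i) := by
    ext i j
    by_cases hij : i = j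
    · subst hij; simp
    · rw [Matrix.diagonal_apply_ne _ hij]; exact hLoff i j hij
  have hpsd : L.PosSemidef := by
    rw [hLdiag]; exact Matrix.PosSemidef.diagonal (Pi.le_def.mpr fun i => hLd i)
  have := hpsd.mul_mul_conjTranspose_same P
  rwa [show Pᴴ = Pᵀ from by ext i j; simp [Matrix.conjTranspose_apply]] at this

lemma prod_coupling (hμ : IsProbabilityMeasure μ) (hν : IsProbabilityMeasure ν) :
    IsCoupling (μ.prod ν) μ ν := by
  constructor
  · rw [Measure.map_fst_prod]; simp
  · rw [Measure.map_snd_prod]; simp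

end Final


/-- Cross-covariance PSD transform. -/
theorem crossCov_psd_transform (d : ℕ) (μ ν : Measure (Ed d)) (hμ : P2 μ) (hν : P2 ν)
    (O : Matrix (Fin d) (Fin d) ℝ) (hO : O ∈ OSet μ ν) :
    ∃ π : Measure (Ed d × Ed d),
      IsOptIGW π μ (matPush O ν) ∧ (crossCov π).PosSemidef ∧
      8 * frobSq ((1 / 2 : ℝ) • crossCov π) + IOT ((1 / 2 : ℝ) • crossCov π) μ (matPush O ν) =
        sInf {v : ℝ | ∃ A : Matrix (Fin d) (Fin d) ℝ,
          v = 8 * frobSq A + IOT A μ (matPush O ν)} := by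

  obtain ⟨π, P, Q, L, hopt, hP, hQ, hLoff, hLd, hcc, hOPQ⟩ := hO
  -- orthogonality facts
  have hPo : Pᵀ * P = 1 := mul_eq_one_comm.mp hP
  have hQo : Qᵀ * Q = 1 := mul_eq_one_comm.mp hQ
  have hOOt : O * Oᵀ = 1 := by
    rw [hOPQ, Matrix.transpose_mul, Matrix.transpose_transpose, Matrix.mul_assoc,
      ← Matrix.mul_assoc Qᵀ Q Pᵀ, hQo, Matrix.one_mul, hP]
  have hOtO : Oᵀ * O = 1 := mul_eq_one_comm.mp hOOt
  have hTc : Continuous (matMap O) := continuous_matMap O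
  have hT'c : Continuous (matMap Oᵀ) := continuous_matMap Oᵀ
  have hinner : ∀ x y : Ed d, ⟪matMap O x, matMap O y⟫ = ⟪x, y⟫ := matMap_inner O hOtO
  have hinner' : ∀ x y : Ed d, ⟪matMap Oᵀ x, matMap Oᵀ y⟫ = ⟪x, y⟫ :=
    matMap_inner Oᵀ (by rwa [Matrix.transpose_transpose])
  -- the transformed objects
  set ν' : Measure (Ed d) := ν.map (matMap O) with hν'def
  have hmatPush : matPush O ν = ν' := rfl
  have hν' : P2 ν' := P2.map hν hTc (matMap_norm_sq O hOtO)
  set π' : Measure (Ed d × Ed d) := π.map (Prod.map id (matMap O)) with hπ'def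
  have hπ'c : IsCoupling π' μ ν' := coupling_map hopt.1 hTc.measurable
  -- optimality of π'
  have hπ'opt : IsOptIGW π' μ ν' := by
    refine ⟨hπ'c, fun π'' h'' => ?_⟩
    have hback : (ν'.map (matMap Oᵀ)) = ν := by
      rw [hν'def, Measure.map_map hT'c.measurable hTc.measurable,
        show matMap Oᵀ ∘ matMap O = id from funext fun x => matMap_comp Oᵀ O hOtO x,
        Measure.map_id]
    have hρc : IsCoupling (π''.map (Prod.map id (matMap Oᵀ))) μ ν := by
      have := coupling_map h'' hT'c.measurable
      rwa [hback] at this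
    calc igwCost π' = igwCost π := igwCost_map hopt.1 hμ.1 hTc hinner
      _ ≤ igwCost (π''.map (Prod.map id (matMap Oᵀ))) := hopt.2 _ hρc
      _ = igwCost π'' := igwCost_map h'' hμ.1 hT'c hinner'
  -- the cross covariance of π'
  have hSg' : crossCov π' = P * L * Pᵀ := by
    rw [hπ'def, crossCov_map hopt.1 hμ hν O, hcc, hOPQ, Matrix.transpose_mul,
      Matrix.transpose_transpose, Matrix.mul_assoc (P * L), ← Matrix.mul_assoc Qᵀ Q Pᵀ,
      hQo, Matrix.one_mul]
  have hpsd : (crossCov π').PosSemidef := by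
    rw [hSg']; exact psd_PLPt P L hLoff hLd
  refine ⟨π', hπ'opt, hpsd, ?_⟩
  -- notation
  set Sg : Matrix (Fin d) (Fin d) ℝ := crossCov π' with hSgdef
  set s : ℝ := frobSq Sg with hsdef
  haveI hμprob := hμ.1
  haveI hν'prob := hν'.1
  -- maximality of s among couplings
  have hsmax : ∀ π'' : Measure (Ed d × Ed d), IsCoupling π'' μ ν' →
      frobSq (crossCov π'') ≤ s := by
    intro π'' h''
    have h1 := igwCost_eq hμ hν' hπ'c
    have h2 := igwCost_eq hμ hν' h''
    have h3 := hπ'opt.2 π'' h''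
    rw [h1, h2] at h3
    linarith
  -- lower bound for the IOT sets
  have hIOTset : ∀ A : Matrix (Fin d) (Fin d) ℝ, ∀ v ∈ {v : ℝ | ∃ πa : Measure (Ed d × Ed d),
      IsCoupling πa μ ν' ∧ v = ∫ p, costA A p.1 p.2 ∂πa},
      -(8 * frobSq A) - 2 * s ≤ v := by
    rintro A v ⟨πa, hπa, rfl⟩
    rw [integral_costA hπa hμ hν' A]
    calc -(8 * frobSq A) - 2 * s ≤ -(8 * frobSq A) - 2 * frobSq (crossCov πa) := by
          have := hsmax πa hπa; linarith
      _ ≤ -8 * ∑ i, ∑ j, A i j * crossCov πa i j := frob_ineq A (crossCov πa)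
  have hne : ∀ A : Matrix (Fin d) (Fin d) ℝ, ∃ v, v ∈ {v : ℝ | ∃ πa : Measure (Ed d × Ed d),
      IsCoupling πa μ ν' ∧ v = ∫ p, costA A p.1 p.2 ∂πa} :=
    fun A => ⟨_, μ.prod ν', prod_coupling hμprob hν'prob, rfl⟩
  have hIOTlb : ∀ A : Matrix (Fin d) (Fin d) ℝ, -(8 * frobSq A) - 2 * s ≤ IOT A μ ν' :=
    fun A => le_csInf (hne A) (hIOTset A)
  -- value at A* = (1/2) Sg
  have hAval : (∫ p, costA ((1 / 2 : ℝ) • Sg) p.1 p.2 ∂π') = -4 * s := by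
    rw [integral_costA hπ'c hμ hν' _, ← hSgdef, sum_smul_self, hsdef]
    ring
  have hIOTub : IOT ((1 / 2 : ℝ) • Sg) μ ν' ≤ -4 * s := by
    refine csInf_le ⟨-(8 * frobSq ((1 / 2 : ℝ) • Sg)) - 2 * s, fun v hv =>
      hIOTset ((1 / 2 : ℝ) • Sg) v hv⟩ ⟨π', hπ'c, hAval.symm⟩
  have hfrobA : frobSq ((1 / 2 : ℝ) • Sg) = s / 4 := by
    rw [frobSq_smul]; ring
  have hIOTlbA : -4 * s ≤ IOT ((1 / 2 : ℝ) • Sg) μ ν' := by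
    have := hIOTlb ((1 / 2 : ℝ) • Sg)
    rw [hfrobA] at this
    linarith
  have hIOTA : IOT ((1 / 2 : ℝ) • Sg) μ ν' = -4 * s := le_antisymm hIOTub hIOTlbA
  have hval : 8 * frobSq ((1 / 2 : ℝ) • Sg) + IOT ((1 / 2 : ℝ) • Sg) μ ν' = -2 * s := by
    rw [hfrobA, hIOTA]; ring
  -- conclusion
  rw [hmatPush, hval]
  have hVlb : ∀ v ∈ {v : ℝ | ∃ A : Matrix (Fin d) (Fin d) ℝ, v = 8 * frobSq A + IOT A μ ν'},
      -2 * s ≤ v := by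
    rintro v ⟨A, rfl⟩
    have := hIOTlb A
    linarith
  have hVmem : (-2 * s) ∈ {v : ℝ | ∃ A : Matrix (Fin d) (Fin d) ℝ,
      v = 8 * frobSq A + IOT A μ ν'} := ⟨(1 / 2 : ℝ) • Sg, hval.symm⟩
  exact le_antisymm (le_csInf ⟨_, hVmem⟩ hVlb) (csInf_le ⟨-2 * s, hVlb⟩ hVmem)
end
end

section
/- Let a,b,c : [0,δ] → ℝ be locally integrable functions and x : [0,δ] → ℝ be continuous such that (d/dt) x²(t) + a(t)·x²(t) ≤ c(t) + b(t)·x(t) for all t ∈ [0,δ]. Setting A(t) := ∫₀^t a(s) ds, for every T ∈ [0,δ] one has e^{A(T)/2}·|x(T)| ≤ ( x²(0) + sup_{t∈[0,T]} ∫₀^t e^{A(s)} c(s) ds )^{1/2} + 2∫₀^T | b(t)·e^{A(t)/2} | dt. -/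
open MeasureTheory Set

noncomputable section
set_option maxHeartbeats 1000000

lemma aux_abs_exp_sub_one_le {d ε : ℝ} (hd : |d| ≤ ε) (hε : ε ≤ 1) :
    |Real.exp d - 1| ≤ ε * Real.exp 1 := by
  have hε0 : 0 ≤ ε := le_trans (abs_nonneg d) hd
  have h1 : Real.exp d ≤ Real.exp ε := Real.exp_le_exp.2 ((le_abs_self d).trans hd)
  have h2 : Real.exp (-ε) ≤ Real.exp d := Real.exp_le_exp.2 (by
    have := neg_abs_le d; linarith [hd])
  have h3 : Real.exp ε * Real.exp (-ε) = 1 := by rw [← Real.exp_add]; simp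
  have h4 : 1 - ε ≤ Real.exp (-ε) := by linarith [Real.add_one_le_exp (-ε)]
  have h5 : Real.exp ε ≤ Real.exp 1 := Real.exp_le_exp.2 hε
  have h6 : (0:ℝ) < Real.exp ε := Real.exp_pos _
  have h7 : (1:ℝ) ≤ Real.exp 1 := by linarith [Real.add_one_le_exp (1:ℝ)]
  rw [abs_le]
  exact ⟨by nlinarith, by nlinarith⟩

/-- Integrated form: `e^{A(T)} x(T)² - x(0)² ≤ ∫₀^T e^{A(t)} ψ(t) dt`
where `ψ` is an integrable upper bound for `D + a x²`. -/
lemma aux_gronwall_integrated (δ : ℝ) (hδ : 0 ≤ δ) (a ψ x D : ℝ → ℝ)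
    (hx : ContinuousOn x (Icc 0 δ))
    (ha : Integrable a) (hψ : IntegrableOn ψ (Icc 0 δ))
    (hD : ∀ t ∈ Icc (0 : ℝ) δ, HasDerivAt (fun s => x s ^ 2) (D t) t)
    (hineq : ∀ t ∈ Icc (0 : ℝ) δ, D t + a t * x t ^ 2 ≤ ψ t) :
    ∀ T ∈ Icc (0 : ℝ) δ,
      Real.exp (∫ s in (0:ℝ)..T, a s) * x T ^ 2 - x 0 ^ 2 ≤
        ∫ t in (0:ℝ)..T, Real.exp (∫ s in (0:ℝ)..t, a s) * ψ t := by
  intro T hT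
  obtain ⟨hT0, hTδ⟩ := hT
  set A : ℝ → ℝ := fun t => ∫ s in (0:ℝ)..t, a s with hAdef
  have hAcont : Continuous A :=
    intervalIntegral.continuous_primitive (fun a' b' => ha.intervalIntegrable) 0
  have hEcont : Continuous fun t => Real.exp (A t) := Real.continuous_exp.comp hAcont
  -- bounds
  obtain ⟨Cx, hCx⟩ := isCompact_Icc.exists_bound_of_continuousOn hx
  have hCx0 : 0 ≤ Cx := le_trans (norm_nonneg _) (hCx 0 (left_mem_Icc.2 hδ))
  obtain ⟨CE, hCE⟩ := isCompact_Icc.exists_bound_of_continuousOn hEcont.continuousOn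
  have hCE0 : 0 < CE := lt_of_lt_of_le (by positivity)
    (le_trans (le_abs_self _) (hCE 0 (left_mem_Icc.2 hδ)))
  have hCE' : ∀ t ∈ Icc (0:ℝ) δ, Real.exp (A t) ≤ CE := fun t ht =>
    le_trans (le_abs_self _) (hCE t ht)
  have hCx' : ∀ t ∈ Icc (0:ℝ) δ, x t ^ 2 ≤ Cx ^ 2 := by
    intro t ht
    have := hCx t ht
    rw [Real.norm_eq_abs] at this
    nlinarith [abs_nonneg (x t), neg_abs_le (x t), le_abs_self (x t)]
  have hψT : IntegrableOn ψ (Icc 0 T) := hψ.mono_set (Icc_subset_Icc le_rfl hTδ)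
  set Iψ : ℝ := ∫ t in (0:ℝ)..T, |ψ t| with hIψdef
  have hIψ0 : 0 ≤ Iψ := intervalIntegral.integral_nonneg hT0 fun _ _ => abs_nonneg _
  -- ε-approximation
  refine le_of_forall_pos_le_add fun η hη => ?_
  set C0 : ℝ := Real.exp 1 * CE * (Iψ + 2 * Cx ^ 2) with hC0def
  have hC00 : 0 ≤ C0 := by positivity
  set ε : ℝ := min 1 (η / (C0 + 1)) with hεdef
  have hε0 : 0 < ε := lt_min one_pos (by positivity)
  have hε1 : ε ≤ 1 := min_le_left _ _
  have hεη : ε * C0 ≤ η := by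
    have h1 : ε ≤ η / (C0 + 1) := min_le_right _ _
    have : ε * (C0 + 1) ≤ η := by
      rw [← le_div_iff₀ (by positivity)]; exact h1
    nlinarith
  obtain ⟨g, -, hgL1, hgcont, hgint⟩ := ha.exists_hasCompactSupport_integral_sub_le hε0
  set Aε : ℝ → ℝ := fun t => ∫ s in (0:ℝ)..t, g s with hAεdef
  have hAεderiv : ∀ t, HasDerivAt Aε (g t) t := fun t =>
    intervalIntegral.integral_hasDerivAt_right (hgcont.intervalIntegrable 0 t)
      hgcont.aestronglyMeasurable.stronglyMeasurableAtFilter hgcont.continuousAt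
  -- |Aε t - A t| ≤ ε  for t ≥ 0
  have hga_int : Integrable (fun s => |g s - a s|) := (hgint.sub ha).abs
  have hL1T : ∀ t, 0 ≤ t → (∫ s in (0:ℝ)..t, |g s - a s|) ≤ ε := by
    intro t ht
    calc (∫ s in (0:ℝ)..t, |g s - a s|) ≤ ∫ s, |g s - a s| := by
          rw [intervalIntegral.integral_of_le ht]
          exact setIntegral_le_integral hga_int (ae_of_all _ fun s => abs_nonneg _)
      _ ≤ ε := by
          have : (∫ s, |g s - a s|) = ∫ s, ‖a s - g s‖ := by
            congr 1; funext s; rw [Real.norm_eq_abs, abs_sub_comm]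
          rw [this]; exact hgL1
  have hdiff : ∀ t, 0 ≤ t → |Aε t - A t| ≤ ε := by
    intro t ht
    have h1 : Aε t - A t = ∫ s in (0:ℝ)..t, (g s - a s) :=
      (intervalIntegral.integral_sub (hgcont.intervalIntegrable 0 t)
        ha.intervalIntegrable).symm
    rw [h1]
    exact le_trans (intervalIntegral.abs_integral_le_integral_abs ht) (hL1T t ht)
  have hEε_le : ∀ t ∈ Icc (0:ℝ) δ, Real.exp (Aε t) ≤ CE * Real.exp 1 := by
    intro t ht
    have h1 : Aε t ≤ A t + ε := by
      have := hdiff t ht.1; rw [abs_le] at this; linarith [this.2]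
    calc Real.exp (Aε t) ≤ Real.exp (A t + ε) := Real.exp_le_exp.2 h1
      _ = Real.exp (A t) * Real.exp ε := Real.exp_add _ _
      _ ≤ CE * Real.exp 1 :=
          mul_le_mul (hCE' t ht) (Real.exp_le_exp.2 hε1) (Real.exp_pos _).le hCE0.le
  have hEdiff : ∀ t ∈ Icc (0:ℝ) δ, |Real.exp (Aε t) - Real.exp (A t)| ≤ ε * Real.exp 1 * CE := by
    intro t ht
    have h1 : Real.exp (Aε t) = Real.exp (A t) * Real.exp (Aε t - A t) := by
      rw [← Real.exp_add]; ring_nf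
    have h2 : |Real.exp (Aε t - A t) - 1| ≤ ε * Real.exp 1 :=
      aux_abs_exp_sub_one_le (hdiff t ht.1) hε1
    calc |Real.exp (Aε t) - Real.exp (A t)|
        = Real.exp (A t) * |Real.exp (Aε t - A t) - 1| := by
          rw [h1, show Real.exp (A t) * Real.exp (Aε t - A t) - Real.exp (A t)
              = Real.exp (A t) * (Real.exp (Aε t - A t) - 1) by ring,
            abs_mul, abs_of_pos (Real.exp_pos _)]
      _ ≤ CE * (ε * Real.exp 1) :=
          mul_le_mul (hCE' t ht) h2 (abs_nonneg _) hCE0.le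
      _ = ε * Real.exp 1 * CE := by ring
  -- apply the fundamental inequality to  `t ↦ exp (Aε t) * x t ^ 2`
  have hEεcont : Continuous fun t => Real.exp (Aε t) :=
    Real.continuous_exp.comp
      (intervalIntegral.continuous_primitive (fun a' b' => hgcont.intervalIntegrable a' b') 0)
  have hxT : ContinuousOn x (Icc 0 T) := hx.mono (Icc_subset_Icc le_rfl hTδ)
  have hsub : ∀ s ∈ Icc (0:ℝ) T, s ∈ Icc (0:ℝ) δ := fun s hs => ⟨hs.1, hs.2.trans hTδ⟩
  have huIcc : uIcc (0:ℝ) T = Icc 0 T := uIcc_of_le hT0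
  have int1 : IntegrableOn (fun t => Real.exp (Aε t) * ψ t) (Icc 0 T) :=
    IntegrableOn.continuousOn_mul hEεcont.continuousOn hψT isCompact_Icc
  have int2 : IntegrableOn (fun t => (g t - a t) * (Real.exp (Aε t) * x t ^ 2)) (Icc 0 T) :=
    ((hgint.sub ha).integrableOn).mul_continuousOn
      (hEεcont.continuousOn.mul (hxT.pow 2)) isCompact_Icc
  have int1' : IntegrableOn (fun t => Real.exp (A t) * ψ t) (Icc 0 T) :=
    IntegrableOn.continuousOn_mul hEcont.continuousOn hψT isCompact_Icc
  have hint1 : IntervalIntegrable (fun t => Real.exp (Aε t) * ψ t) volume 0 T :=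
    IntegrableOn.intervalIntegrable (huIcc ▸ int1)
  have hint2 : IntervalIntegrable (fun t => (g t - a t) * (Real.exp (Aε t) * x t ^ 2)) volume 0 T :=
    IntegrableOn.intervalIntegrable (huIcc ▸ int2)
  have hint1' : IntervalIntegrable (fun t => Real.exp (A t) * ψ t) volume 0 T :=
    IntegrableOn.intervalIntegrable (huIcc ▸ int1')
  have hintabs : IntervalIntegrable (fun t => |ψ t|) volume 0 T :=
    (IntegrableOn.intervalIntegrable (huIcc ▸ hψT)).abs
  have main : Real.exp (Aε T) * x T ^ 2 - Real.exp (Aε 0) * x 0 ^ 2 ≤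
      ∫ t in (0:ℝ)..T,
        (Real.exp (Aε t) * ψ t + (g t - a t) * (Real.exp (Aε t) * x t ^ 2)) := by
    refine intervalIntegral.sub_le_integral_of_hasDeriv_right_of_le
      (g' := fun t => Real.exp (Aε t) * g t * x t ^ 2 + Real.exp (Aε t) * D t)
      hT0 (hEεcont.continuousOn.mul (hxT.pow 2)) ?_ (int1.add int2) ?_
    · intro t ht
      have htδ : t ∈ Icc (0:ℝ) δ := ⟨ht.1.le, ht.2.le.trans hTδ⟩
      exact (((hAεderiv t).exp).mul (hD t htδ)).hasDerivWithinAt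
    · intro t ht
      have htδ : t ∈ Icc (0:ℝ) δ := ⟨ht.1.le, ht.2.le.trans hTδ⟩
      have h2 := mul_le_mul_of_nonneg_left (hineq t htδ) (Real.exp_pos (Aε t)).le
      show Real.exp (Aε t) * g t * x t ^ 2 + Real.exp (Aε t) * D t ≤
        Real.exp (Aε t) * ψ t + (g t - a t) * (Real.exp (Aε t) * x t ^ 2)
      nlinarith [h2]
  have hsplit : (∫ t in (0:ℝ)..T,
        (Real.exp (Aε t) * ψ t + (g t - a t) * (Real.exp (Aε t) * x t ^ 2)))
      = (∫ t in (0:ℝ)..T, Real.exp (Aε t) * ψ t)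
        + ∫ t in (0:ℝ)..T, (g t - a t) * (Real.exp (Aε t) * x t ^ 2) :=
    intervalIntegral.integral_add hint1 hint2
  -- bound the error term coming from `g - a`
  have hterm2 : (∫ t in (0:ℝ)..T, (g t - a t) * (Real.exp (Aε t) * x t ^ 2))
      ≤ ε * (CE * Real.exp 1 * Cx ^ 2) := by
    have hconst : (0:ℝ) ≤ CE * Real.exp 1 * Cx ^ 2 := by positivity
    have hmono : (∫ t in (0:ℝ)..T, (g t - a t) * (Real.exp (Aε t) * x t ^ 2))
        ≤ ∫ t in (0:ℝ)..T, |g t - a t| * (CE * Real.exp 1 * Cx ^ 2) := by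
      refine intervalIntegral.integral_mono_on hT0 hint2
        (hga_int.intervalIntegrable.mul_const _) ?_
      intro t ht
      have htδ := hsub t ht
      have e1 : (0:ℝ) ≤ Real.exp (Aε t) * x t ^ 2 := by positivity
      have e2 : Real.exp (Aε t) * x t ^ 2 ≤ CE * Real.exp 1 * Cx ^ 2 := by
        have h1 := hEε_le t htδ
        have h2 := hCx' t htδ
        nlinarith [Real.exp_pos (Aε t), sq_nonneg (x t)]
      calc (g t - a t) * (Real.exp (Aε t) * x t ^ 2)
          ≤ |g t - a t| * (Real.exp (Aε t) * x t ^ 2) :=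
            mul_le_mul_of_nonneg_right (le_abs_self _) e1
        _ ≤ |g t - a t| * (CE * Real.exp 1 * Cx ^ 2) :=
            mul_le_mul_of_nonneg_left e2 (abs_nonneg _)
    calc (∫ t in (0:ℝ)..T, (g t - a t) * (Real.exp (Aε t) * x t ^ 2))
        ≤ ∫ t in (0:ℝ)..T, |g t - a t| * (CE * Real.exp 1 * Cx ^ 2) := hmono
      _ = (∫ t in (0:ℝ)..T, |g t - a t|) * (CE * Real.exp 1 * Cx ^ 2) :=
          intervalIntegral.integral_mul_const _ _
      _ ≤ ε * (CE * Real.exp 1 * Cx ^ 2) :=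
          mul_le_mul_of_nonneg_right (hL1T T hT0) hconst
  -- bound the difference between the two weighted integrals of ψ
  have hterm1 : (∫ t in (0:ℝ)..T, Real.exp (Aε t) * ψ t)
      ≤ (∫ t in (0:ℝ)..T, Real.exp (A t) * ψ t) + ε * Real.exp 1 * CE * Iψ := by
    have hb : (∫ t in (0:ℝ)..T, (Real.exp (Aε t) * ψ t - Real.exp (A t) * ψ t))
        ≤ ∫ t in (0:ℝ)..T, (ε * Real.exp 1 * CE) * |ψ t| := by
      refine intervalIntegral.integral_mono_on hT0 (hint1.sub hint1')
        (hintabs.const_mul _) ?_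
      intro t ht
      have h1 := hEdiff t (hsub t ht)
      calc Real.exp (Aε t) * ψ t - Real.exp (A t) * ψ t
          = (Real.exp (Aε t) - Real.exp (A t)) * ψ t := by ring
        _ ≤ |(Real.exp (Aε t) - Real.exp (A t)) * ψ t| := le_abs_self _
        _ = |Real.exp (Aε t) - Real.exp (A t)| * |ψ t| := abs_mul _ _
        _ ≤ (ε * Real.exp 1 * CE) * |ψ t| :=
            mul_le_mul_of_nonneg_right h1 (abs_nonneg _)
    rw [intervalIntegral.integral_sub hint1 hint1',
      intervalIntegral.integral_const_mul] at hb
    linarith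
  -- endpoint comparison
  have hend : Real.exp (A T) * x T ^ 2
      ≤ Real.exp (Aε T) * x T ^ 2 + ε * (Real.exp 1 * CE * Cx ^ 2) := by
    have h1 := hEdiff T ⟨hT0, hTδ⟩
    have h2 := hCx' T ⟨hT0, hTδ⟩
    have h3 : Real.exp (A T) - Real.exp (Aε T) ≤ ε * Real.exp 1 * CE := by
      have := abs_le.1 h1; linarith [this.1]
    have h4 := mul_le_mul_of_nonneg_right h3 (sq_nonneg (x T))
    have h5 : (0:ℝ) ≤ ε * Real.exp 1 * CE := by positivity
    nlinarith [sq_nonneg (x T)]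
  have hAε0 : Aε 0 = 0 := intervalIntegral.integral_same
  rw [hAε0, Real.exp_zero, one_mul] at main
  have hC0split : ε * C0 = ε * (Real.exp 1 * CE * Iψ) + ε * (Real.exp 1 * CE * Cx ^ 2)
      + ε * (CE * Real.exp 1 * Cx ^ 2) := by rw [hC0def]; ring
  have hεIψ : ε * Real.exp 1 * CE * Iψ = ε * (Real.exp 1 * CE * Iψ) := by ring
  linarith [hεη, main, hsplit ▸ main, hterm1, hterm2, hend]

/-- Grönwall-type lemma. -/
theorem gronwall_type_lemma (δ : ℝ) (hδ : 0 ≤ δ)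
    (a b c x D : ℝ → ℝ)
    (hx : ContinuousOn x (Icc 0 δ))
    (ha : IntegrableOn a (Icc 0 δ)) (hb : IntegrableOn b (Icc 0 δ))
    (hc : IntegrableOn c (Icc 0 δ))
    -- `t ↦ x(t)²` is differentiable with derivative `D`, satisfying the differential inequality
    (hD : ∀ t ∈ Icc (0 : ℝ) δ, HasDerivAt (fun s => x s ^ 2) (D t) t)
    (hineq : ∀ t ∈ Icc (0 : ℝ) δ, D t + a t * x t ^ 2 ≤ c t + b t * x t) :
    ∀ T ∈ Icc (0 : ℝ) δ,
      Real.exp ((∫ s in (0 : ℝ)..T, a s) / 2) * |x T| ≤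
        Real.sqrt (x 0 ^ 2 +
            ⨆ t : Icc (0 : ℝ) T,
              ∫ s in (0 : ℝ)..(t : ℝ), Real.exp (∫ u in (0 : ℝ)..s, a u) * c s) +
          2 * ∫ t in (0 : ℝ)..T, |b t * Real.exp ((∫ s in (0 : ℝ)..t, a s) / 2)| := by
  intro T hT
  obtain ⟨hT0, hTδ⟩ := hT
  have hIccT : Icc (0:ℝ) T ⊆ Icc 0 δ := Icc_subset_Icc le_rfl hTδ
  have huIcc : uIcc (0:ℝ) T = Icc 0 T := uIcc_of_le hT0
  -- the indicator extension of `a`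
  have ha' : Integrable ((Icc (0:ℝ) δ).indicator a) :=
    (integrable_indicator_iff measurableSet_Icc).2 ha
  have hAeq : ∀ t ∈ Icc (0:ℝ) δ,
      (∫ s in (0:ℝ)..t, (Icc (0:ℝ) δ).indicator a s) = ∫ s in (0:ℝ)..t, a s := by
    intro t ht
    rw [intervalIntegral.integral_of_le ht.1, intervalIntegral.integral_of_le ht.1]
    apply setIntegral_congr_fun measurableSet_Ioc
    intro s hs
    exact Set.indicator_of_mem (show s ∈ Icc 0 δ from ⟨hs.1.le, hs.2.trans ht.2⟩) a
  -- the right-hand side of the differential inequality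
  have hψint : IntegrableOn (fun t => c t + b t * x t) (Icc 0 δ) :=
    hc.add (hb.mul_continuousOn hx isCompact_Icc)
  have hineq' : ∀ t ∈ Icc (0:ℝ) δ,
      D t + (Icc (0:ℝ) δ).indicator a t * x t ^ 2 ≤ c t + b t * x t := by
    intro t ht
    rw [indicator_of_mem ht]
    exact hineq t ht
  have key := aux_gronwall_integrated δ hδ ((Icc (0:ℝ) δ).indicator a)
    (fun t => c t + b t * x t) x D hx ha' hψint hD hineq'
  -- rewrite the key inequality in terms of `a`
  have key' : ∀ t ∈ Icc (0:ℝ) T,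
      Real.exp (∫ s in (0:ℝ)..t, a s) * x t ^ 2 - x 0 ^ 2 ≤
        ∫ s in (0:ℝ)..t, Real.exp (∫ u in (0:ℝ)..s, a u) * (c s + b s * x s) := by
    intro t ht
    have h1 := key t (hIccT ht)
    rw [hAeq t (hIccT ht)] at h1
    have h2 : (∫ s in (0:ℝ)..t,
          Real.exp (∫ u in (0:ℝ)..s, (Icc (0:ℝ) δ).indicator a u) * (c s + b s * x s))
        = ∫ s in (0:ℝ)..t, Real.exp (∫ u in (0:ℝ)..s, a u) * (c s + b s * x s) := by
      apply intervalIntegral.integral_congr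
      intro s hs
      rw [uIcc_of_le ht.1] at hs
      show Real.exp (∫ u in (0:ℝ)..s, (Icc (0:ℝ) δ).indicator a u) * (c s + b s * x s)
        = Real.exp (∫ u in (0:ℝ)..s, a u) * (c s + b s * x s)
      rw [hAeq s (hIccT ⟨hs.1, hs.2.trans ht.2⟩)]
    rwa [h2] at h1
  -- continuity facts
  have hAcontOn : ContinuousOn (fun t => ∫ s in (0:ℝ)..t, a s) (Icc 0 T) := by
    rw [← huIcc]
    exact intervalIntegral.continuousOn_primitive_interval (huIcc ▸ (ha.mono_set hIccT))
  have hEcontOn : ContinuousOn (fun t => Real.exp (∫ s in (0:ℝ)..t, a s)) (Icc 0 T) :=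
    Real.continuous_exp.comp_continuousOn hAcontOn
  have hFcontOn : ContinuousOn (fun t => Real.exp ((∫ s in (0:ℝ)..t, a s) / 2)) (Icc 0 T) :=
    Real.continuous_exp.comp_continuousOn (hAcontOn.div_const 2)
  have hxT : ContinuousOn x (Icc 0 T) := hx.mono hIccT
  have hcT : IntegrableOn c (Icc 0 T) := hc.mono_set hIccT
  have hbT : IntegrableOn b (Icc 0 T) := hb.mono_set hIccT
  -- properties of the supremum `S`
  set S : ℝ := ⨆ t : Icc (0:ℝ) T,
      ∫ s in (0:ℝ)..(t : ℝ), Real.exp (∫ u in (0:ℝ)..s, a u) * c s with hSdef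
  have hEc_int : IntegrableOn (fun s => Real.exp (∫ u in (0:ℝ)..s, a u) * c s) (Icc 0 T) :=
    IntegrableOn.continuousOn_mul hEcontOn hcT isCompact_Icc
  have hgScont : ContinuousOn
      (fun t => ∫ s in (0:ℝ)..t, Real.exp (∫ u in (0:ℝ)..s, a u) * c s) (Icc 0 T) := by
    rw [← huIcc]
    exact intervalIntegral.continuousOn_primitive_interval (huIcc ▸ hEc_int)
  have hbdd : BddAbove (range fun t : Icc (0:ℝ) T =>
      ∫ s in (0:ℝ)..(t : ℝ), Real.exp (∫ u in (0:ℝ)..s, a u) * c s) := by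
    obtain ⟨M, hM⟩ := (isCompact_Icc.image_of_continuousOn hgScont).bddAbove
    refine ⟨M, ?_⟩
    rintro y ⟨t, rfl⟩
    exact hM (mem_image_of_mem _ t.2)
  have hSb : ∀ t ∈ Icc (0:ℝ) T,
      (∫ s in (0:ℝ)..t, Real.exp (∫ u in (0:ℝ)..s, a u) * c s) ≤ S :=
    fun t ht => le_ciSup hbdd ⟨t, ht⟩
  have hS0 : 0 ≤ S := by
    have h1 := hSb 0 (left_mem_Icc.2 hT0)
    rwa [intervalIntegral.integral_same] at h1
  -- properties of `B`
  set B : ℝ := ∫ t in (0:ℝ)..T, |b t * Real.exp ((∫ s in (0:ℝ)..t, a s) / 2)| with hBdef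
  have hbF_int : IntegrableOn
      (fun t => |b t * Real.exp ((∫ s in (0:ℝ)..t, a s) / 2)|) (Icc 0 T) :=
    (hbT.mul_continuousOn hFcontOn isCompact_Icc).abs
  have hB0 : 0 ≤ B := intervalIntegral.integral_nonneg hT0 fun _ _ => abs_nonneg _
  have hBt : ∀ t ∈ Icc (0:ℝ) T,
      (∫ s in (0:ℝ)..t, |b s * Real.exp ((∫ u in (0:ℝ)..s, a u) / 2)|) ≤ B := by
    intro t ht
    exact intervalIntegral.integral_mono_interval le_rfl ht.1 ht.2
      (ae_of_all _ fun s => abs_nonneg _) (IntegrableOn.intervalIntegrable (huIcc ▸ hbF_int))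
  -- the maximum of `u(t) = e^{A(t)/2} |x(t)|` on `[0, T]`
  have hucont : ContinuousOn
      (fun t => Real.exp ((∫ s in (0:ℝ)..t, a s) / 2) * |x t|) (Icc 0 T) :=
    hFcontOn.mul hxT.abs
  obtain ⟨t₀, ht₀, hmax⟩ := isCompact_Icc.exists_isMaxOn (nonempty_Icc.2 hT0) hucont
  set V : ℝ := Real.exp ((∫ s in (0:ℝ)..t₀, a s) / 2) * |x t₀| with hVdef
  have hV0 : 0 ≤ V := mul_nonneg (Real.exp_pos _).le (abs_nonneg _)
  have huV : ∀ t ∈ Icc (0:ℝ) T,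
      Real.exp ((∫ s in (0:ℝ)..t, a s) / 2) * |x t| ≤ V := fun t ht => hmax ht
  -- square identity
  have hu2 : ∀ t : ℝ, (Real.exp ((∫ s in (0:ℝ)..t, a s) / 2) * |x t|) ^ 2
      = Real.exp (∫ s in (0:ℝ)..t, a s) * x t ^ 2 := by
    intro t
    rw [mul_pow, sq_abs, sq, ← Real.exp_add, add_halves]
  -- the main pointwise estimate
  have hkey2 : ∀ t ∈ Icc (0:ℝ) T,
      (Real.exp ((∫ s in (0:ℝ)..t, a s) / 2) * |x t|) ^ 2 ≤ (x 0 ^ 2 + S) + V * B := by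
    intro t ht
    have h1 := key' t ht
    have hmemIcc : uIcc (0:ℝ) t ⊆ uIcc (0:ℝ) T := by
      rw [uIcc_of_le ht.1, huIcc]; exact Icc_subset_Icc le_rfl ht.2
    have hEc_t : IntervalIntegrable (fun s => Real.exp (∫ u in (0:ℝ)..s, a u) * c s)
        volume 0 t := (IntegrableOn.intervalIntegrable (huIcc ▸ hEc_int)).mono_set hmemIcc
    have hEbx_t : IntervalIntegrable (fun s => Real.exp (∫ u in (0:ℝ)..s, a u) * (b s * x s))
        volume 0 t := by
      refine IntervalIntegrable.mono_set ?_ hmemIcc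
      exact IntegrableOn.intervalIntegrable (huIcc ▸
        (IntegrableOn.continuousOn_mul hEcontOn
          (hbT.mul_continuousOn hxT isCompact_Icc) isCompact_Icc))
    have hbF_t : IntervalIntegrable
        (fun s => |b s * Real.exp ((∫ u in (0:ℝ)..s, a u) / 2)|) volume 0 t :=
      (IntegrableOn.intervalIntegrable (huIcc ▸ hbF_int)).mono_set hmemIcc
    have hsplit : (∫ s in (0:ℝ)..t, Real.exp (∫ u in (0:ℝ)..s, a u) * (c s + b s * x s))
        = (∫ s in (0:ℝ)..t, Real.exp (∫ u in (0:ℝ)..s, a u) * c s)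
          + ∫ s in (0:ℝ)..t, Real.exp (∫ u in (0:ℝ)..s, a u) * (b s * x s) := by
      rw [← intervalIntegral.integral_add hEc_t hEbx_t]
      apply intervalIntegral.integral_congr
      intro s _
      ring
    have hsecond : (∫ s in (0:ℝ)..t, Real.exp (∫ u in (0:ℝ)..s, a u) * (b s * x s)) ≤ V * B := by
      have hmono : (∫ s in (0:ℝ)..t, Real.exp (∫ u in (0:ℝ)..s, a u) * (b s * x s))
          ≤ ∫ s in (0:ℝ)..t, |b s * Real.exp ((∫ u in (0:ℝ)..s, a u) / 2)| * V := by
        refine intervalIntegral.integral_mono_on ht.1 hEbx_t (hbF_t.mul_const V) ?_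
        intro s hs
        have hsT : s ∈ Icc (0:ℝ) T := ⟨hs.1, hs.2.trans ht.2⟩
        have e1 : Real.exp (∫ u in (0:ℝ)..s, a u) * (b s * x s)
            = (b s * Real.exp ((∫ u in (0:ℝ)..s, a u) / 2))
              * (Real.exp ((∫ u in (0:ℝ)..s, a u) / 2) * x s) := by
          rw [show (b s * Real.exp ((∫ u in (0:ℝ)..s, a u) / 2))
              * (Real.exp ((∫ u in (0:ℝ)..s, a u) / 2) * x s)
              = (Real.exp ((∫ u in (0:ℝ)..s, a u) / 2)
                * Real.exp ((∫ u in (0:ℝ)..s, a u) / 2)) * (b s * x s) by ring,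
            ← Real.exp_add, add_halves]
        have e3 : |Real.exp ((∫ u in (0:ℝ)..s, a u) / 2) * x s|
            = Real.exp ((∫ u in (0:ℝ)..s, a u) / 2) * |x s| := by
          rw [abs_mul, abs_of_pos (Real.exp_pos _)]
        calc Real.exp (∫ u in (0:ℝ)..s, a u) * (b s * x s)
            = (b s * Real.exp ((∫ u in (0:ℝ)..s, a u) / 2))
              * (Real.exp ((∫ u in (0:ℝ)..s, a u) / 2) * x s) := e1
          _ ≤ |b s * Real.exp ((∫ u in (0:ℝ)..s, a u) / 2)|
              * |Real.exp ((∫ u in (0:ℝ)..s, a u) / 2) * x s| := by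
              calc (b s * Real.exp ((∫ u in (0:ℝ)..s, a u) / 2))
                  * (Real.exp ((∫ u in (0:ℝ)..s, a u) / 2) * x s)
                  ≤ |(b s * Real.exp ((∫ u in (0:ℝ)..s, a u) / 2))
                    * (Real.exp ((∫ u in (0:ℝ)..s, a u) / 2) * x s)| := le_abs_self _
                _ = _ := abs_mul _ _
          _ ≤ |b s * Real.exp ((∫ u in (0:ℝ)..s, a u) / 2)| * V := by
              rw [e3]
              exact mul_le_mul_of_nonneg_left (huV s hsT) (abs_nonneg _)
      calc (∫ s in (0:ℝ)..t, Real.exp (∫ u in (0:ℝ)..s, a u) * (b s * x s))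
          ≤ ∫ s in (0:ℝ)..t, |b s * Real.exp ((∫ u in (0:ℝ)..s, a u) / 2)| * V := hmono
        _ = (∫ s in (0:ℝ)..t, |b s * Real.exp ((∫ u in (0:ℝ)..s, a u) / 2)|) * V :=
            intervalIntegral.integral_mul_const _ _
        _ ≤ B * V := mul_le_mul_of_nonneg_right (hBt t ht) hV0
        _ = V * B := mul_comm _ _
    have hfirst := hSb t ht
    rw [hu2 t]
    rw [hsplit] at h1
    linarith
  -- closing the Grönwall argument
  have hVsq : V ^ 2 ≤ (x 0 ^ 2 + S) + V * B := hkey2 t₀ ht₀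
  have huT : Real.exp ((∫ s in (0:ℝ)..T, a s) / 2) * |x T| ≤ V :=
    huV T (right_mem_Icc.2 hT0)
  have hK0 : 0 ≤ x 0 ^ 2 + S := add_nonneg (sq_nonneg _) hS0
  have hs2 : Real.sqrt (x 0 ^ 2 + S) ^ 2 = x 0 ^ 2 + S := Real.sq_sqrt hK0
  have hs0 : 0 ≤ Real.sqrt (x 0 ^ 2 + S) := Real.sqrt_nonneg _
  have hVle : V ≤ Real.sqrt (x 0 ^ 2 + S) + 2 * B := by
    by_contra hcon
    push_neg at hcon
    nlinarith [hVsq, hs2, hs0, hB0, hV0]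
  linarith
end
end
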